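/- arXiv:2112.14751 — 6 statements merged into one kernel-verified Lean document; each statement's English description precedes it below -/
import Mathlib

section
/- A continuous map g : X → Y has the right lifting property with respect to every surjective continuous map, i.e. g lies in {∅→{*}}^{rr}, if and only if g is injective and inducing (a topological embedding), i.e. the topology on X is induced by g. -/
open Topology

/-- `HasLift i p`: the map `i` has the left lifting property with respect to `p`
(equivalently, `p` has the right lifting property with respect to `i`). -/
def HasLift {A B X Y : Type*} [TopologicalSpace A] [TopologicalSpace B]
    [TopologicalSpace X] [TopologicalSpace Y] (i : C(A, B)) (p : C(X, Y)) : Prop :=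
  ∀ (f : C(A, X)) (g : C(B, Y)), p.comp f = g.comp i →
    ∃ d : C(B, X), d.comp i = f ∧ p.comp d = g

/-- A map lies in `{∅ → {*}}ʳʳ`, i.e. has the right lifting property with respect to
every surjective continuous map, iff it is injective and inducing (an embedding). -/
theorem stmt1 {X Y : Type u} [TopologicalSpace X] [TopologicalSpace Y] (g : C(X, Y)) :
    (∀ (A B : Type u) (_ : TopologicalSpace A) (_ : TopologicalSpace B) (s : C(A, B)),
        Function.Surjective s → HasLift s g) ↔
      (Function.Injective g ∧ IsInducing g) := by
  constructor
  · intro h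
    constructor
    · -- injectivity
      intro x x' hxx
      letI tA : TopologicalSpace (ULift.{u} Bool) := ⊥
      letI tB : TopologicalSpace PUnit.{u+1} := ⊥
      let s : C(ULift.{u} Bool, PUnit.{u+1}) := ⟨fun _ => PUnit.unit, continuous_const⟩
      have hs : Function.Surjective s := fun p => ⟨⟨true⟩, rfl⟩
      have hl := h (ULift.{u} Bool) PUnit.{u+1} tA tB s hs
      let f : C(ULift.{u} Bool, X) :=
        ⟨fun b => if b.down then x else x', continuous_bot⟩
      let g' : C(PUnit.{u+1}, Y) := ⟨fun _ => g x, continuous_const⟩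
      have hsq : g.comp f = g'.comp s := by
        ext b
        rcases b with ⟨_ | _⟩ <;> simp [f, g', s, hxx]
      obtain ⟨d, hd1, _⟩ := hl f g' hsq
      have h1 : d PUnit.unit = x' := by
        have := congrArg (fun k => (k : C(ULift.{u} Bool, X)) ⟨false⟩) hd1
        simpa [s, f] using this
      have h2 : d PUnit.unit = x := by
        have := congrArg (fun k => (k : C(ULift.{u} Bool, X)) ⟨true⟩) hd1
        simpa [s, f] using this
      rw [← h2, h1]
    · -- inducing
      have hle : ‹TopologicalSpace X› ≤ TopologicalSpace.induced g ‹TopologicalSpace Y› :=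
        continuous_iff_le_induced.mp g.continuous
      have hsid : Continuous[‹TopologicalSpace X›,
          TopologicalSpace.induced g ‹TopologicalSpace Y›] id :=
        (@continuous_id_iff_le X ‹TopologicalSpace X›
          (TopologicalSpace.induced g ‹TopologicalSpace Y›)).mpr hle
      obtain ⟨d, hd1, -⟩ :=
        h X X ‹TopologicalSpace X› (TopologicalSpace.induced g ‹TopologicalSpace Y›)
          (@ContinuousMap.mk X X ‹TopologicalSpace X›
            (TopologicalSpace.induced g ‹TopologicalSpace Y›) id hsid)
          (fun x => ⟨x, rfl⟩)
          (ContinuousMap.id X)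
          (@ContinuousMap.mk X Y (TopologicalSpace.induced g ‹TopologicalSpace Y›)
            ‹TopologicalSpace Y› g continuous_induced_dom)
          (ContinuousMap.ext fun a => rfl)
      have hdid : (d : X → X) = id := by
        funext a
        exact congrArg (fun k => (k : C(X, X)) a) hd1
      have hge : TopologicalSpace.induced g ‹TopologicalSpace Y› ≤ ‹TopologicalSpace X› := by
        have hc := @ContinuousMap.continuous X X
          (TopologicalSpace.induced g ‹TopologicalSpace Y›) ‹TopologicalSpace X› d
        rw [hdid] at hc
        exact (@continuous_id_iff_le X
          (TopologicalSpace.induced g ‹TopologicalSpace Y›) ‹TopologicalSpace X›).mp hc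
      exact ⟨le_antisymm hle hge⟩
  · rintro ⟨hinj, hind⟩ A B tA tB s hs f g' hsq
    have key : ∀ a : A, g (f (Function.surjInv hs (s a))) = g (f a) := by
      intro a
      have h1 := congrArg (fun k => (k : C(A, Y)) (Function.surjInv hs (s a))) hsq
      have h2 := congrArg (fun k => (k : C(A, Y)) a) hsq
      simp only [ContinuousMap.comp_apply] at h1 h2
      rw [h1, h2, Function.surjInv_eq hs]
    have hgd : ∀ b : B, g (f (Function.surjInv hs b)) = g' b := by
      intro b
      obtain ⟨a, rfl⟩ := hs b
      have h2 := congrArg (fun k => (k : C(A, Y)) a) hsq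
      simp only [ContinuousMap.comp_apply] at h2
      rw [key a, h2]
    have hcont : Continuous fun b : B => f (Function.surjInv hs b) := by
      rw [hind.continuous_iff]
      have : (g ∘ fun b : B => f (Function.surjInv hs b)) = g' := funext hgd
      rw [this]; exact g'.continuous
    refine ⟨⟨fun b => f (Function.surjInv hs b), hcont⟩, ?_, ?_⟩
    · ext a
      exact hinj (key a)
    · ext b
      exact hgd b
end

section
/- A topological space X is normal (any two disjoint closed sets have disjoint open neighborhoods; T4 not assumed T1) if and only if the map ∅ → X has the left lifting property with respect to the map M → Λ, where Λ is the three-point space {a ← u → b} with u open and a, b closed, M is the five-point space {a ← u → x ← v → b} with u, v open and a, x, b closed, and the map M → Λ sends a ↦ a, b ↦ b and collapses u, x, v to the single open point u of Λ. -/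
open Topology

/-- The three-point space `Λ = {a ← u → b}` with one open point `u` and two closed
points `a`, `b`. -/
inductive Lam | a | u | b

instance : TopologicalSpace Lam where
  IsOpen S := (Lam.a ∈ S → Lam.u ∈ S) ∧ (Lam.b ∈ S → Lam.u ∈ S)
  isOpen_univ := by simp
  isOpen_inter := by
    intro s t hs ht
    exact ⟨fun h => ⟨hs.1 h.1, ht.1 h.2⟩, fun h => ⟨hs.2 h.1, ht.2 h.2⟩⟩
  isOpen_sUnion := by
    intro S hS
    constructor
    · rintro ⟨s, hs, has⟩; exact ⟨s, hs, ((hS s hs).1 has)⟩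
    · rintro ⟨s, hs, hbs⟩; exact ⟨s, hs, ((hS s hs).2 hbs)⟩

/-- The five-point space `M = {a ← u → x ← v → b}` with two open points `u`, `v`
and three closed points `a`, `x`, `b`. -/
inductive Mspace | a | u | x | v | b

instance : TopologicalSpace Mspace where
  IsOpen S := (Mspace.a ∈ S → Mspace.u ∈ S) ∧ (Mspace.x ∈ S → Mspace.u ∈ S ∧ Mspace.v ∈ S) ∧
    (Mspace.b ∈ S → Mspace.v ∈ S)
  isOpen_univ := by simp
  isOpen_inter := by
    intro s t hs ht
    exact ⟨fun h => ⟨hs.1 h.1, ht.1 h.2⟩,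
      fun h => ⟨⟨(hs.2.1 h.1).1, (ht.2.1 h.2).1⟩, ⟨(hs.2.1 h.1).2, (ht.2.1 h.2).2⟩⟩,
      fun h => ⟨hs.2.2 h.1, ht.2.2 h.2⟩⟩
  isOpen_sUnion := by
    intro S hS
    refine ⟨?_, ?_, ?_⟩
    · rintro ⟨s, hs, h⟩; exact ⟨s, hs, (hS s hs).1 h⟩
    · rintro ⟨s, hs, h⟩; exact ⟨⟨s, hs, ((hS s hs).2.1 h).1⟩, ⟨s, hs, ((hS s hs).2.1 h).2⟩⟩
    · rintro ⟨s, hs, h⟩; exact ⟨s, hs, (hS s hs).2.2 h⟩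

/-- The map `M → Λ` sending `a ↦ a`, `b ↦ b` and `u, x, v ↦ u`. -/
def MtoLam : C(Mspace, Lam) where
  toFun := fun m => match m with
    | Mspace.a => Lam.a
    | Mspace.b => Lam.b
    | _ => Lam.u
  continuous_toFun := by
    rw [continuous_def]
    intro S hS
    obtain ⟨h1, h2⟩ := hS
    exact ⟨fun h => h1 h, fun h => ⟨h, h⟩, fun h => h2 h⟩

section Aux

set_option maxHeartbeats 1000000 in
open Classical in
/-- Auxiliary: continuity of the lift `X → M` built from a normal separation. -/
lemma aux_dcont {X : Type*} [TopologicalSpace X] (A B U V : Set X)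
    (hAc : IsClosed A) (hBc : IsClosed B) (hU : IsOpen U) (hV : IsOpen V)
    (hAU : ∀ x, x ∈ A → x ∈ U) (hBV : ∀ x, x ∈ B → x ∈ V)
    (hUV : ∀ x, x ∈ U → x ∉ V) :
    Continuous (fun x => if x ∈ A then Mspace.a else if x ∈ B then Mspace.b else
      if x ∈ U then Mspace.u else if x ∈ V then Mspace.v else Mspace.x) := by
  have hAB : ∀ x, x ∈ A → x ∉ B := fun x hx hx' => hUV x (hAU x hx) (hBV x hx')
  rw [continuous_def]
  intro S hS
  obtain ⟨h1, h2, h3⟩ : (Mspace.a ∈ S → Mspace.u ∈ S) ∧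
      (Mspace.x ∈ S → Mspace.u ∈ S ∧ Mspace.v ∈ S) ∧ (Mspace.b ∈ S → Mspace.v ∈ S) := hS
  by_cases hu : Mspace.u ∈ S <;> by_cases hv : Mspace.v ∈ S
  · by_cases hx : Mspace.x ∈ S
    · by_cases ha : Mspace.a ∈ S <;> by_cases hb : Mspace.b ∈ S
      · have : (fun x => if x ∈ A then Mspace.a else if x ∈ B then Mspace.b else
          if x ∈ U then Mspace.u else if x ∈ V then Mspace.v else Mspace.x) ⁻¹' S = Set.univ := by
          ext y
          have k1 : y ∈ A → y ∈ U := hAU y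
          have k2 : y ∈ B → y ∈ V := hBV y
          have k3 : y ∈ U → y ∉ V := hUV y
          have k4 : y ∈ A → y ∉ B := hAB y
          have k5 : y ∈ B → y ∉ U := fun h h' => hUV y h' (hBV y h)
          have k6 : y ∈ A → y ∉ V := fun h => hUV y (hAU y h)
          have k7 : y ∈ V → y ∉ U := fun h h' => hUV y h' h
          simp only [Set.mem_preimage, Set.mem_univ, Set.mem_compl_iff, Set.mem_union,
            Set.mem_inter_iff, Set.mem_empty_iff_false]
          split_ifs with hA hB hU' hV' <;> simp_all
        rw [this]; exact isOpen_univ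
      · have : (fun x => if x ∈ A then Mspace.a else if x ∈ B then Mspace.b else
          if x ∈ U then Mspace.u else if x ∈ V then Mspace.v else Mspace.x) ⁻¹' S = Bᶜ := by
          ext y
          have k1 : y ∈ A → y ∈ U := hAU y
          have k2 : y ∈ B → y ∈ V := hBV y
          have k3 : y ∈ U → y ∉ V := hUV y
          have k4 : y ∈ A → y ∉ B := hAB y
          have k5 : y ∈ B → y ∉ U := fun h h' => hUV y h' (hBV y h)
          have k6 : y ∈ A → y ∉ V := fun h => hUV y (hAU y h)
          have k7 : y ∈ V → y ∉ U := fun h h' => hUV y h' h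
          simp only [Set.mem_preimage, Set.mem_univ, Set.mem_compl_iff, Set.mem_union,
            Set.mem_inter_iff, Set.mem_empty_iff_false]
          split_ifs with hA hB hU' hV' <;> simp_all
        rw [this]; exact hBc.isOpen_compl
      · have : (fun x => if x ∈ A then Mspace.a else if x ∈ B then Mspace.b else
          if x ∈ U then Mspace.u else if x ∈ V then Mspace.v else Mspace.x) ⁻¹' S = Aᶜ := by
          ext y
          have k1 : y ∈ A → y ∈ U := hAU y
          have k2 : y ∈ B → y ∈ V := hBV y
          have k3 : y ∈ U → y ∉ V := hUV y
          have k4 : y ∈ A → y ∉ B := hAB y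
          have k5 : y ∈ B → y ∉ U := fun h h' => hUV y h' (hBV y h)
          have k6 : y ∈ A → y ∉ V := fun h => hUV y (hAU y h)
          have k7 : y ∈ V → y ∉ U := fun h h' => hUV y h' h
          simp only [Set.mem_preimage, Set.mem_univ, Set.mem_compl_iff, Set.mem_union,
            Set.mem_inter_iff, Set.mem_empty_iff_false]
          split_ifs with hA hB hU' hV' <;> simp_all
        rw [this]; exact hAc.isOpen_compl
      · have : (fun x => if x ∈ A then Mspace.a else if x ∈ B then Mspace.b else
          if x ∈ U then Mspace.u else if x ∈ V then Mspace.v else Mspace.x) ⁻¹' S = (A ∪ B)ᶜ := by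
          ext y
          have k1 : y ∈ A → y ∈ U := hAU y
          have k2 : y ∈ B → y ∈ V := hBV y
          have k3 : y ∈ U → y ∉ V := hUV y
          have k4 : y ∈ A → y ∉ B := hAB y
          have k5 : y ∈ B → y ∉ U := fun h h' => hUV y h' (hBV y h)
          have k6 : y ∈ A → y ∉ V := fun h => hUV y (hAU y h)
          have k7 : y ∈ V → y ∉ U := fun h h' => hUV y h' h
          simp only [Set.mem_preimage, Set.mem_univ, Set.mem_compl_iff, Set.mem_union,
            Set.mem_inter_iff, Set.mem_empty_iff_false]
          split_ifs with hA hB hU' hV' <;> simp_all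
        rw [this]; exact (hAc.union hBc).isOpen_compl
    · by_cases ha : Mspace.a ∈ S <;> by_cases hb : Mspace.b ∈ S
      · have : (fun x => if x ∈ A then Mspace.a else if x ∈ B then Mspace.b else
          if x ∈ U then Mspace.u else if x ∈ V then Mspace.v else Mspace.x) ⁻¹' S = U ∪ V := by
          ext y
          have k1 : y ∈ A → y ∈ U := hAU y
          have k2 : y ∈ B → y ∈ V := hBV y
          have k3 : y ∈ U → y ∉ V := hUV y
          have k4 : y ∈ A → y ∉ B := hAB y
          have k5 : y ∈ B → y ∉ U := fun h h' => hUV y h' (hBV y h)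
          have k6 : y ∈ A → y ∉ V := fun h => hUV y (hAU y h)
          have k7 : y ∈ V → y ∉ U := fun h h' => hUV y h' h
          simp only [Set.mem_preimage, Set.mem_univ, Set.mem_compl_iff, Set.mem_union,
            Set.mem_inter_iff, Set.mem_empty_iff_false]
          split_ifs with hA hB hU' hV' <;> simp_all
        rw [this]; exact hU.union hV
      · have : (fun x => if x ∈ A then Mspace.a else if x ∈ B then Mspace.b else
          if x ∈ U then Mspace.u else if x ∈ V then Mspace.v else Mspace.x) ⁻¹' S = U ∪ (V ∩ Bᶜ) := by
          ext y
          have k1 : y ∈ A → y ∈ U := hAU y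
          have k2 : y ∈ B → y ∈ V := hBV y
          have k3 : y ∈ U → y ∉ V := hUV y
          have k4 : y ∈ A → y ∉ B := hAB y
          have k5 : y ∈ B → y ∉ U := fun h h' => hUV y h' (hBV y h)
          have k6 : y ∈ A → y ∉ V := fun h => hUV y (hAU y h)
          have k7 : y ∈ V → y ∉ U := fun h h' => hUV y h' h
          simp only [Set.mem_preimage, Set.mem_univ, Set.mem_compl_iff, Set.mem_union,
            Set.mem_inter_iff, Set.mem_empty_iff_false]
          split_ifs with hA hB hU' hV' <;> simp_all
        rw [this]; exact hU.union (hV.inter hBc.isOpen_compl)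
      · have : (fun x => if x ∈ A then Mspace.a else if x ∈ B then Mspace.b else
          if x ∈ U then Mspace.u else if x ∈ V then Mspace.v else Mspace.x) ⁻¹' S = (U ∩ Aᶜ) ∪ V := by
          ext y
          have k1 : y ∈ A → y ∈ U := hAU y
          have k2 : y ∈ B → y ∈ V := hBV y
          have k3 : y ∈ U → y ∉ V := hUV y
          have k4 : y ∈ A → y ∉ B := hAB y
          have k5 : y ∈ B → y ∉ U := fun h h' => hUV y h' (hBV y h)
          have k6 : y ∈ A → y ∉ V := fun h => hUV y (hAU y h)
          have k7 : y ∈ V → y ∉ U := fun h h' => hUV y h' h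
          simp only [Set.mem_preimage, Set.mem_univ, Set.mem_compl_iff, Set.mem_union,
            Set.mem_inter_iff, Set.mem_empty_iff_false]
          split_ifs with hA hB hU' hV' <;> simp_all
        rw [this]; exact (hU.inter hAc.isOpen_compl).union hV
      · have : (fun x => if x ∈ A then Mspace.a else if x ∈ B then Mspace.b else
          if x ∈ U then Mspace.u else if x ∈ V then Mspace.v else Mspace.x) ⁻¹' S = (U ∩ Aᶜ) ∪ (V ∩ Bᶜ) := by
          ext y
          have k1 : y ∈ A → y ∈ U := hAU y
          have k2 : y ∈ B → y ∈ V := hBV y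
          have k3 : y ∈ U → y ∉ V := hUV y
          have k4 : y ∈ A → y ∉ B := hAB y
          have k5 : y ∈ B → y ∉ U := fun h h' => hUV y h' (hBV y h)
          have k6 : y ∈ A → y ∉ V := fun h => hUV y (hAU y h)
          have k7 : y ∈ V → y ∉ U := fun h h' => hUV y h' h
          simp only [Set.mem_preimage, Set.mem_univ, Set.mem_compl_iff, Set.mem_union,
            Set.mem_inter_iff, Set.mem_empty_iff_false]
          split_ifs with hA hB hU' hV' <;> simp_all
        rw [this]; exact (hU.inter hAc.isOpen_compl).union (hV.inter hBc.isOpen_compl)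
  · have hx : Mspace.x ∉ S := fun h => hv (h2 h).2
    have hb : Mspace.b ∉ S := fun h => hv (h3 h)
    by_cases ha : Mspace.a ∈ S
    · have : (fun x => if x ∈ A then Mspace.a else if x ∈ B then Mspace.b else
          if x ∈ U then Mspace.u else if x ∈ V then Mspace.v else Mspace.x) ⁻¹' S = U := by
        ext y
        have k1 : y ∈ A → y ∈ U := hAU y
        have k2 : y ∈ B → y ∈ V := hBV y
        have k3 : y ∈ U → y ∉ V := hUV y
        have k4 : y ∈ A → y ∉ B := hAB y
        have k5 : y ∈ B → y ∉ U := fun h h' => hUV y h' (hBV y h)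
        have k6 : y ∈ A → y ∉ V := fun h => hUV y (hAU y h)
        have k7 : y ∈ V → y ∉ U := fun h h' => hUV y h' h
        simp only [Set.mem_preimage, Set.mem_univ, Set.mem_compl_iff, Set.mem_union,
          Set.mem_inter_iff, Set.mem_empty_iff_false]
        split_ifs with hA hB hU' hV' <;> simp_all
      rw [this]; exact hU
    · have : (fun x => if x ∈ A then Mspace.a else if x ∈ B then Mspace.b else
          if x ∈ U then Mspace.u else if x ∈ V then Mspace.v else Mspace.x) ⁻¹' S = U ∩ Aᶜ := by
        ext y
        have k1 : y ∈ A → y ∈ U := hAU y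
        have k2 : y ∈ B → y ∈ V := hBV y
        have k3 : y ∈ U → y ∉ V := hUV y
        have k4 : y ∈ A → y ∉ B := hAB y
        have k5 : y ∈ B → y ∉ U := fun h h' => hUV y h' (hBV y h)
        have k6 : y ∈ A → y ∉ V := fun h => hUV y (hAU y h)
        have k7 : y ∈ V → y ∉ U := fun h h' => hUV y h' h
        simp only [Set.mem_preimage, Set.mem_univ, Set.mem_compl_iff, Set.mem_union,
          Set.mem_inter_iff, Set.mem_empty_iff_false]
        split_ifs with hA hB hU' hV' <;> simp_all
      rw [this]; exact hU.inter hAc.isOpen_compl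
  · have hx : Mspace.x ∉ S := fun h => hu (h2 h).1
    have ha : Mspace.a ∉ S := fun h => hu (h1 h)
    by_cases hb : Mspace.b ∈ S
    · have : (fun x => if x ∈ A then Mspace.a else if x ∈ B then Mspace.b else
          if x ∈ U then Mspace.u else if x ∈ V then Mspace.v else Mspace.x) ⁻¹' S = V := by
        ext y
        have k1 : y ∈ A → y ∈ U := hAU y
        have k2 : y ∈ B → y ∈ V := hBV y
        have k3 : y ∈ U → y ∉ V := hUV y
        have k4 : y ∈ A → y ∉ B := hAB y
        have k5 : y ∈ B → y ∉ U := fun h h' => hUV y h' (hBV y h)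
        have k6 : y ∈ A → y ∉ V := fun h => hUV y (hAU y h)
        have k7 : y ∈ V → y ∉ U := fun h h' => hUV y h' h
        simp only [Set.mem_preimage, Set.mem_univ, Set.mem_compl_iff, Set.mem_union,
          Set.mem_inter_iff, Set.mem_empty_iff_false]
        split_ifs with hA hB hU' hV' <;> simp_all
      rw [this]; exact hV
    · have : (fun x => if x ∈ A then Mspace.a else if x ∈ B then Mspace.b else
          if x ∈ U then Mspace.u else if x ∈ V then Mspace.v else Mspace.x) ⁻¹' S = V ∩ Bᶜ := by
        ext y
        have k1 : y ∈ A → y ∈ U := hAU y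
        have k2 : y ∈ B → y ∈ V := hBV y
        have k3 : y ∈ U → y ∉ V := hUV y
        have k4 : y ∈ A → y ∉ B := hAB y
        have k5 : y ∈ B → y ∉ U := fun h h' => hUV y h' (hBV y h)
        have k6 : y ∈ A → y ∉ V := fun h => hUV y (hAU y h)
        have k7 : y ∈ V → y ∉ U := fun h h' => hUV y h' h
        simp only [Set.mem_preimage, Set.mem_univ, Set.mem_compl_iff, Set.mem_union,
          Set.mem_inter_iff, Set.mem_empty_iff_false]
        split_ifs with hA hB hU' hV' <;> simp_all
      rw [this]; exact hV.inter hBc.isOpen_compl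
  · have ha : Mspace.a ∉ S := fun h => hu (h1 h)
    have hb : Mspace.b ∉ S := fun h => hv (h3 h)
    have hx : Mspace.x ∉ S := fun h => hu (h2 h).1
    have : (fun x => if x ∈ A then Mspace.a else if x ∈ B then Mspace.b else
        if x ∈ U then Mspace.u else if x ∈ V then Mspace.v else Mspace.x) ⁻¹' S = ∅ := by
      ext y
      have k1 : y ∈ A → y ∈ U := hAU y
      have k2 : y ∈ B → y ∈ V := hBV y
      have k3 : y ∈ U → y ∉ V := hUV y
      have k4 : y ∈ A → y ∉ B := hAB y
      have k5 : y ∈ B → y ∉ U := fun h h' => hUV y h' (hBV y h)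
      have k6 : y ∈ A → y ∉ V := fun h => hUV y (hAU y h)
      have k7 : y ∈ V → y ∉ U := fun h h' => hUV y h' h
      simp only [Set.mem_preimage, Set.mem_univ, Set.mem_compl_iff, Set.mem_union,
        Set.mem_inter_iff, Set.mem_empty_iff_false]
      split_ifs with hA hB hU' hV' <;> simp_all
    rw [this]; exact isOpen_empty

open Classical in
/-- Auxiliary: continuity of the map `X → Λ` built from two disjoint closed sets. -/
lemma aux_gcont {X : Type*} [TopologicalSpace X] (C D : Set X)
    (hC : IsClosed C) (hD : IsClosed D) (hCD : ∀ x, x ∈ C → x ∉ D) :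
    Continuous (fun x => if x ∈ C then Lam.a else if x ∈ D then Lam.b else Lam.u) := by
  rw [continuous_def]
  intro S hS
  obtain ⟨h1, h2⟩ : (Lam.a ∈ S → Lam.u ∈ S) ∧ (Lam.b ∈ S → Lam.u ∈ S) := hS
  by_cases hu : Lam.u ∈ S
  · by_cases ha : Lam.a ∈ S <;> by_cases hb : Lam.b ∈ S
    · have : (fun x => if x ∈ C then Lam.a else if x ∈ D then Lam.b else Lam.u) ⁻¹' S
          = Set.univ := by
        ext y; simp only [Set.mem_preimage, Set.mem_univ, iff_true]
        split_ifs <;> assumption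
      rw [this]; exact isOpen_univ
    · have : (fun x => if x ∈ C then Lam.a else if x ∈ D then Lam.b else Lam.u) ⁻¹' S
          = Dᶜ := by
        ext y; simp only [Set.mem_preimage, Set.mem_compl_iff]
        split_ifs with hC' hD' <;> simp_all [hCD y]
      rw [this]; exact hD.isOpen_compl
    · have : (fun x => if x ∈ C then Lam.a else if x ∈ D then Lam.b else Lam.u) ⁻¹' S
          = Cᶜ := by
        ext y; simp only [Set.mem_preimage, Set.mem_compl_iff]
        split_ifs with hC' hD' <;> simp_all
      rw [this]; exact hC.isOpen_compl
    · have : (fun x => if x ∈ C then Lam.a else if x ∈ D then Lam.b else Lam.u) ⁻¹' S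
          = (C ∪ D)ᶜ := by
        ext y; simp only [Set.mem_preimage, Set.mem_compl_iff, Set.mem_union]
        split_ifs with hC' hD' <;> simp_all
      rw [this]; exact (hC.union hD).isOpen_compl
  · have ha : Lam.a ∉ S := fun h => hu (h1 h)
    have hb : Lam.b ∉ S := fun h => hu (h2 h)
    have : (fun x => if x ∈ C then Lam.a else if x ∈ D then Lam.b else Lam.u) ⁻¹' S = ∅ := by
      ext y; simp only [Set.mem_preimage, Set.mem_empty_iff_false, iff_false]
      split_ifs <;> assumption
    rw [this]; exact isOpen_empty

lemma aux_closed_a : IsClosed ({Lam.a} : Set Lam) := by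
  rw [← isOpen_compl_iff]
  show (Lam.a ∈ _ → Lam.u ∈ _) ∧ (Lam.b ∈ _ → Lam.u ∈ _)
  constructor <;> intro h <;> simp_all

lemma aux_closed_b : IsClosed ({Lam.b} : Set Lam) := by
  rw [← isOpen_compl_iff]
  show (Lam.a ∈ _ → Lam.u ∈ _) ∧ (Lam.b ∈ _ → Lam.u ∈ _)
  constructor <;> intro h <;> simp_all

lemma aux_open_au : IsOpen ({Mspace.a, Mspace.u} : Set Mspace) := by
  show (Mspace.a ∈ _ → Mspace.u ∈ _) ∧ (Mspace.x ∈ _ → _ ∧ _) ∧ (Mspace.b ∈ _ → Mspace.v ∈ _)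
  refine ⟨fun _ => Or.inr rfl, fun h => ?_, fun h => ?_⟩ <;> simp_all

lemma aux_open_bv : IsOpen ({Mspace.b, Mspace.v} : Set Mspace) := by
  show (Mspace.a ∈ _ → Mspace.u ∈ _) ∧ (Mspace.x ∈ _ → _ ∧ _) ∧ (Mspace.b ∈ _ → Mspace.v ∈ _)
  refine ⟨fun h => ?_, fun h => ?_, fun _ => Or.inr rfl⟩ <;> simp_all

end Aux

open Classical in
/-- A space `X` is normal (T4, not necessarily T1) iff `∅ → X` has the left lifting
property with respect to `M → Λ`. -/
theorem stmt5 {X : Type*} [TopologicalSpace X] :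
    NormalSpace X ↔
      HasLift (⟨Empty.elim, continuous_of_discreteTopology⟩ : C(Empty, X)) MtoLam := by
  constructor
  · intro hN f g _
    have hAc : IsClosed (g ⁻¹' {Lam.a}) := aux_closed_a.preimage g.continuous
    have hBc : IsClosed (g ⁻¹' {Lam.b}) := aux_closed_b.preimage g.continuous
    have hABdis : Disjoint (g ⁻¹' {Lam.a}) (g ⁻¹' {Lam.b}) := by
      rw [Set.disjoint_left]
      intro x hxA hxB
      have h1 : g x = Lam.a := hxA
      have h2 : g x = Lam.b := hxB
      rw [h1] at h2; exact nomatch h2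
    obtain ⟨U, V, hU, hV, hAU, hBV, hUV⟩ := hN.normal _ _ hAc hBc hABdis
    have hAU' : ∀ x, x ∈ g ⁻¹' {Lam.a} → x ∈ U := fun x hx => hAU hx
    have hBV' : ∀ x, x ∈ g ⁻¹' {Lam.b} → x ∈ V := fun x hx => hBV hx
    have hUV' : ∀ x, x ∈ U → x ∉ V := fun x hx hx' => Set.disjoint_left.mp hUV hx hx'
    refine ⟨⟨fun x => if x ∈ g ⁻¹' {Lam.a} then Mspace.a else
        if x ∈ g ⁻¹' {Lam.b} then Mspace.b else
        if x ∈ U then Mspace.u else if x ∈ V then Mspace.v else Mspace.x,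
        aux_dcont _ _ _ _ hAc hBc hU hV hAU' hBV' hUV'⟩, ?_, ?_⟩
    · ext x; exact x.elim
    · ext x
      simp only [ContinuousMap.comp_apply, ContinuousMap.coe_mk, MtoLam]
      by_cases hA : x ∈ g ⁻¹' {Lam.a}
      · have hg : g x = Lam.a := hA
        simp [hA, hg]
      · by_cases hB : x ∈ g ⁻¹' {Lam.b}
        · have hg : g x = Lam.b := hB
          simp [hA, hB, hg]
        · have hga : g x ≠ Lam.a := hA
          have hgb : g x ≠ Lam.b := hB
          have hg : g x = Lam.u := by cases h : g x <;> simp_all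
          simp only [hA, hB, if_false, hg]
          split_ifs <;> rfl
  · intro hL
    refine ⟨fun C D hC hD hCD => ?_⟩
    have hCD' : ∀ x, x ∈ C → x ∉ D := fun x hx hx' => Set.disjoint_left.mp hCD hx hx'
    obtain ⟨d, -, hd2⟩ := hL ⟨Empty.elim, continuous_of_discreteTopology⟩
      ⟨fun x => if x ∈ C then Lam.a else if x ∈ D then Lam.b else Lam.u,
        aux_gcont C D hC hD hCD'⟩
      (by ext x; exact x.elim)
    have hd2' : ∀ x, MtoLam (d x) =
        (if x ∈ C then Lam.a else if x ∈ D then Lam.b else Lam.u) := fun x =>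
      ContinuousMap.congr_fun hd2 x
    refine ⟨d ⁻¹' {Mspace.a, Mspace.u}, d ⁻¹' {Mspace.b, Mspace.v},
      aux_open_au.preimage d.continuous, aux_open_bv.preimage d.continuous, ?_, ?_, ?_⟩
    · intro x hx
      have hg := hd2' x
      rw [if_pos hx] at hg
      show d x ∈ ({Mspace.a, Mspace.u} : Set Mspace)
      cases h : d x <;> rw [h] at hg <;> simp_all [MtoLam]
    · intro x hx
      have hg := hd2' x
      rw [if_neg (fun hxC => hCD' x hxC hx), if_pos hx] at hg
      show d x ∈ ({Mspace.b, Mspace.v} : Set Mspace)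
      cases h : d x <;> rw [h] at hg <;> simp_all [MtoLam]
    · rw [Set.disjoint_left]
      rintro x (h1 | h1) (h2 | h2) <;> rw [h1] at h2 <;> exact nomatch h2
end

section
/- Let X be a hereditarily normal Hausdorff space and A a Hausdorff space, with a continuous map i : A → X. If i has the left lifting property with respect to M → Λ, then i is injective. -/
open Topology

/-- If `X` is hereditarily normal Hausdorff, `A` is Hausdorff, and `i : A → X` has the
left lifting property with respect to `M → Λ`, then `i` is injective. -/
theorem stmt7 {A X : Type*} [TopologicalSpace A] [TopologicalSpace X]
    [T2Space A] [T2Space X] [CompletelyNormalSpace X] (i : C(A, X))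
    (h : HasLift i MtoLam) : Function.Injective i := by
  classical
  intro a₁ a₂ hi
  by_contra hne
  obtain ⟨U, V, hU, hV, ha1, ha2, hdisj⟩ := t2_separation hne
  set F : A → Mspace := fun a => if a ∈ U then Mspace.u else if a ∈ V then Mspace.v else Mspace.x
    with hF
  have hcont : Continuous F := by
    rw [continuous_def]
    intro S hS
    by_cases hx : Mspace.x ∈ S
    · have hu := (hS.2.1 hx).1
      have hv := (hS.2.1 hx).2
      have : F ⁻¹' S = Set.univ := by
        ext a
        by_cases haU : a ∈ U <;> by_cases haV : a ∈ V <;> simp [hF, haU, haV, hu, hv, hx]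
      rw [this]; exact isOpen_univ
    · have : F ⁻¹' S = (if Mspace.u ∈ S then U else ∅) ∪ (if Mspace.v ∈ S then V else ∅) := by
        ext a
        by_cases haU : a ∈ U
        · have haV : a ∉ V := fun hm => Set.disjoint_left.mp hdisj haU hm
          by_cases hu : Mspace.u ∈ S <;> by_cases hv : Mspace.v ∈ S <;>
            simp [hF, haU, haV, hu, hv, hx]
        · by_cases haV : a ∈ V <;> by_cases hu : Mspace.u ∈ S <;>
            by_cases hv : Mspace.v ∈ S <;> simp [hF, haU, haV, hu, hv, hx]
      rw [this]
      apply IsOpen.union <;> split <;> simp [hU, hV]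
  set f : C(A, Mspace) := ⟨F, hcont⟩ with hfdef
  set g : C(X, Lam) := ContinuousMap.const X Lam.u with hgdef
  have hcomm : MtoLam.comp f = g.comp i := by
    ext a
    by_cases haU : a ∈ U <;> by_cases haV : a ∈ V <;>
      simp [hfdef, hgdef, hF, MtoLam, haU, haV]
  obtain ⟨d, hd1, hd2⟩ := h f g hcomm
  have h1 : d (i a₁) = Mspace.u := by
    have := DFunLike.congr_fun hd1 a₁
    simpa [hfdef, hF, ha1] using this
  have h2 : d (i a₂) = Mspace.v := by
    have := DFunLike.congr_fun hd1 a₂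
    have ha2U : a₂ ∉ U := fun hmem => Set.disjoint_left.mp hdisj hmem ha2
    simpa [hfdef, hF, ha2U, ha2] using this
  rw [hi, h2] at h1
  exact Mspace.noConfusion h1
end

section
/- Let i : A → X be a continuous map with the left lifting property with respect to M → Λ, where X is Hausdorff. Then the image i(A) is closed in X, provided i is injective and A is Hausdorff. -/
open Topology

/-- If `i : A → X` is injective, `A` and `X` are Hausdorff, and `i` has the left lifting
property with respect to `M → Λ`, then the image of `i` is closed in `X`. -/
theorem stmt8 {A X : Type*} [TopologicalSpace A] [TopologicalSpace X]
    [T2Space A] [T2Space X] (i : C(A, X)) (hi : Function.Injective i)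
    (h : HasLift i MtoLam) : IsClosed (Set.range i) := by
  classical
  rw [← isOpen_compl_iff, isOpen_iff_forall_mem_open]
  intro x₀ hx₀
  -- the constant map A → M at the closed middle point x
  let f : C(A, Mspace) := ⟨fun _ => Mspace.x, continuous_const⟩
  -- g : X → Λ, sending x₀ to a and everything else to u
  have hgc : Continuous (fun y : X => if y = x₀ then Lam.a else Lam.u) := by
    rw [continuous_def]
    intro S hS
    by_cases hu : Lam.u ∈ S
    · by_cases ha : Lam.a ∈ S
      · have : (fun y : X => if y = x₀ then Lam.a else Lam.u) ⁻¹' S = Set.univ := by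
          ext y; simp only [Set.mem_preimage, Set.mem_univ, iff_true]
          split <;> assumption
        rw [this]; exact isOpen_univ
      · have : (fun y : X => if y = x₀ then Lam.a else Lam.u) ⁻¹' S = {x₀}ᶜ := by
          ext y; simp only [Set.mem_preimage, Set.mem_compl_iff, Set.mem_singleton_iff]
          split <;> simp_all
        rw [this]; exact isOpen_compl_singleton
    · have ha : Lam.a ∉ S := fun ha => hu (hS.1 ha)
      have : (fun y : X => if y = x₀ then Lam.a else Lam.u) ⁻¹' S = ∅ := by
        ext y; simp only [Set.mem_preimage, Set.mem_empty_iff_false, iff_false]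
        split <;> assumption
      rw [this]; exact isOpen_empty
  let g : C(X, Lam) := ⟨_, hgc⟩
  have hcomm : MtoLam.comp f = g.comp i := by
    ext a
    have : i a ≠ x₀ := fun he => hx₀ ⟨a, he⟩
    simp [f, g, MtoLam, this]
  obtain ⟨d, hd1, hd2⟩ := h f g hcomm
  -- d x₀ = Mspace.a
  have hdx : d x₀ = Mspace.a := by
    have : MtoLam (d x₀) = Lam.a := by
      have := DFunLike.congr_fun hd2 x₀
      simpa [g] using this
    cases hda : d x₀ <;> simp [MtoLam, hda] at this ⊢
  -- the open set {a, u} pulled back along d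
  have hopen : IsOpen ({Mspace.a, Mspace.u} : Set Mspace) := by
    constructor
    · intro _; right; rfl
    constructor
    · rintro (h | h) <;> simp_all
    · rintro (h | h) <;> simp_all
  refine ⟨d ⁻¹' {Mspace.a, Mspace.u}, ?_, d.continuous.isOpen_preimage _ hopen, ?_⟩
  · rintro y hy ⟨a, rfl⟩
    have : d (i a) = Mspace.x := DFunLike.congr_fun hd1 a
    rw [Set.mem_preimage, this] at hy
    rcases hy with h | h <;> simp_all
  · show d x₀ ∈ ({Mspace.a, Mspace.u} : Set Mspace)
    rw [hdx]; left; rfl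
end

section
/- If a continuous map i : A → X has the left lifting property with respect to M → Λ, then the topology on A is induced from X: for every open subset U of A there exists an open subset V of X with i⁻¹(V) = U. -/
open Topology

lemma isOpen_u : IsOpen ({Mspace.u} : Set Mspace) := by
  constructor
  · intro h; cases h
  constructor
  · intro h; cases h
  · intro h; cases h

/-- If `i : A → X` has the left lifting property with respect to `M → Λ`, then the
topology on `A` is induced from `X`: every open subset of `A` is the preimage of an open
subset of `X`. -/
theorem stmt9 {A X : Type*} [TopologicalSpace A] [TopologicalSpace X] (i : C(A, X))
    (h : HasLift i MtoLam) :
    ∀ U : Set A, IsOpen U → ∃ V : Set X, IsOpen V ∧ i ⁻¹' V = U := by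
  intro U hU
  classical
  -- f : A → M, U ↦ u, Uᶜ ↦ x
  have fcont : Continuous (fun a : A => if a ∈ U then Mspace.u else Mspace.x) := by
    rw [continuous_def]
    intro S hS
    obtain ⟨-, h2, -⟩ := hS
    by_cases hu : Mspace.u ∈ S
    · by_cases hx : Mspace.x ∈ S
      · convert isOpen_univ
        ext a; simp only [Set.mem_preimage, Set.mem_univ, iff_true]
        by_cases ha : a ∈ U <;> simp [ha, hu, hx]
      · convert hU
        ext a; simp only [Set.mem_preimage]
        by_cases ha : a ∈ U <;> simp [ha, hu, hx]
    · convert isOpen_empty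
      ext a; simp only [Set.mem_preimage, Set.mem_empty_iff_false, iff_false]
      by_cases ha : a ∈ U <;> simp [ha, hu]
      intro hx; exact hu (h2 hx).1
  let f : C(A, Mspace) := ⟨_, fcont⟩
  let g : C(X, Lam) := ⟨fun _ => Lam.u, continuous_const⟩
  have hcomm : MtoLam.comp f = g.comp i := by
    ext a
    simp only [ContinuousMap.comp_apply]
    show MtoLam (if a ∈ U then Mspace.u else Mspace.x) = Lam.u
    by_cases ha : a ∈ U <;> simp [ha, MtoLam]
  obtain ⟨d, hd1, hd2⟩ := h f g hcomm
  refine ⟨d ⁻¹' {Mspace.u}, isOpen_u.preimage d.continuous, ?_⟩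
  ext a
  simp only [Set.mem_preimage, Set.mem_singleton_iff]
  rw [show d (i a) = f a from ContinuousMap.congr_fun hd1 a]
  show (if a ∈ U then Mspace.u else Mspace.x) = Mspace.u ↔ a ∈ U
  by_cases ha : a ∈ U <;> simp [ha]
end

section
/- A map f of finite topological spaces is closed (equivalently, proper) if and only if f has the right lifting property with respect to the inclusion {o} → {o → c} of the open point into the Sierpiński space. -/
/-!
Both conditions say that `f` lifts specializations: whenever `f x ⤳ y` there is `x ⤳ x'` with
`f x' = y`. For the lifting property this is because a continuous map out of the Sierpiński
space `Prop` is the same as a specialization `g True ⤳ g False`. For closedness, a closed map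
always lifts specializations, and conversely in a finite (more generally Alexandrov-discrete)
space the closed sets are exactly the sets stable under specialization, and the image of such
a set under a specialization-lifting map is again stable under specialization.
-/

open Topology

section

variable {X Y : Type*} [TopologicalSpace X] [TopologicalSpace Y]

theorem true_specializes_false : True ⤳ False :=
  specializes_iff_pure.2 (nhds_false ▸ le_top)

namespace ContinuousMap

open scoped Classical in
noncomputable def ofSpecializes {x y : X} (h : x ⤳ y) : C(Prop, X) where
  toFun p := if p then x else y
  continuous_toFun := by
    refine continuous_iff_continuousAt.2 fun p => ?_
    by_cases hp : p
    · rw [ContinuousAt, eq_true hp, nhds_true]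
      exact tendsto_pure_nhds _ _
    · simp only [ContinuousAt, eq_false hp, nhds_false, Filter.tendsto_def, Filter.mem_top,
        Set.eq_univ_iff_forall]
      -- every neighbourhood of `y` also contains `x`
      intro U hU q
      by_cases hq : q
      · simpa [hq] using mem_of_mem_nhds (h.nhds_le_nhds hU)
      · simpa [hq] using mem_of_mem_nhds hU

@[simp]
theorem ofSpecializes_true {x y : X} (h : x ⤳ y) : ofSpecializes h True = x := if_pos trivial

@[simp]
theorem ofSpecializes_false {x y : X} (h : x ⤳ y) : ofSpecializes h False = y := if_neg id

end ContinuousMap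

open ContinuousMap in
theorem hasLift_iff_specializingMap (f : C(X, Y)) :
    HasLift (⟨fun _ => True, continuous_const⟩ : C(PUnit, Prop)) f ↔ SpecializingMap f := by
  constructor
  · intro hf x y (hxy : f x ⤳ y)
    obtain ⟨d, hd, hfd⟩ := hf (.const _ x) (ofSpecializes hxy) (by ext; simp)
    have hdTrue : d True = x := DFunLike.congr_fun hd PUnit.unit
    refine ⟨d False, hdTrue ▸ true_specializes_false.map d.continuous, ?_⟩
    simpa using DFunLike.congr_fun hfd False
  · intro hf x₀ g hg
    have hgTrue : g True = f (x₀ PUnit.unit) := (DFunLike.congr_fun hg PUnit.unit).symm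
    obtain ⟨x, hx : x₀ PUnit.unit ⤳ x, hfx⟩ :=
      hf (hgTrue ▸ true_specializes_false.map g.continuous)
    refine ⟨ofSpecializes hx, by ext; simp, ?_⟩
    ext p
    by_cases hp : p
    · simp [eq_true hp, hgTrue]
    · simp [eq_false hp, hfx]

theorem isClosed_iff_stableUnderSpecialization [AlexandrovDiscrete X] {s : Set X} :
    IsClosed s ↔ StableUnderSpecialization s := by
  rw [← isOpen_compl_iff, isOpen_iff_forall_specializes]
  exact ⟨fun h x y hxy hx => not_not.1 fun hy => h x y hxy hy hx,
    fun h x y hxy hy hx => hy (h hxy hx)⟩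

theorem SpecializingMap.isClosedMap [AlexandrovDiscrete Y] {f : X → Y}
    (hf : SpecializingMap f) : IsClosedMap f := fun _ hs =>
  isClosed_iff_stableUnderSpecialization.2
    (hf.stableUnderSpecialization_image hs.stableUnderSpecialization)

end

theorem stmt17_general {X Y : Type*} [TopologicalSpace X] [TopologicalSpace Y]
    [Finite Y] (f : C(X, Y)) :
    IsClosedMap f ↔ HasLift (⟨fun _ => True, continuous_const⟩ : C(PUnit, Prop)) f := by
  rw [hasLift_iff_specializingMap]
  exact ⟨IsClosedMap.specializingMap, SpecializingMap.isClosedMap⟩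

/-- A map of finite topological spaces is closed (equivalently, proper) iff it has the
right lifting property with respect to the inclusion `{o} → {o → c}` of the open point
into the Sierpiński space. -/
theorem stmt17 {X Y : Type*} [TopologicalSpace X] [TopologicalSpace Y]
    [Finite X] [Finite Y] (f : C(X, Y)) :
    IsClosedMap f ↔ HasLift (⟨fun _ => True, continuous_const⟩ : C(PUnit, Prop)) f :=
  stmt17_general f
end
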